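/- Let 1 < p < ∞, v ∈ Â_p with representation v = (Mh)^{1−p}u, u ∈ A₁. Then for every cube Q and every measurable E ⊆ Q, v(Q)/v(E) ≤ C_{n,p} ‖u‖_{A₁} (|Q|/|E|)^p; equivalently (|E|/|Q|)^p v(Q)/v(E) ≤ C_{n,p} ‖u‖_{A₁}. -/

import Mathlib

open MeasureTheory ENNReal NNReal Set Filter

noncomputable def wInt {n : ℕ} (v : (Fin n → ℝ) → ℝ) (E : Set (Fin n → ℝ)) : ℝ≥0∞ :=
  ∫⁻ x in E, ENNReal.ofReal (v x)

noncomputable def maxOp {n : ℕ} (h : (Fin n → ℝ) → ℝ) (x : Fin n → ℝ) : ℝ≥0∞ :=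
  ⨆ (c : Fin n → ℝ) (r : ℝ) (_ : 0 < r) (_ : x ∈ Metric.closedBall c r),
    (∫⁻ y in Metric.closedBall c r, ENNReal.ofReal |h y|) / volume (Metric.closedBall c r)

def IsA1 {n : ℕ} (u : (Fin n → ℝ) → ℝ) (C : ℝ) : Prop :=
  (∀ x, 0 ≤ u x) ∧ MeasureTheory.LocallyIntegrable u volume ∧
    ∀ (c : Fin n → ℝ) (r : ℝ), 0 < r →
      wInt u (Metric.closedBall c r) ≤
        ENNReal.ofReal C *
          essInf (fun y => ENNReal.ofReal (u y)) (volume.restrict (Metric.closedBall c r)) *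
          volume (Metric.closedBall c r)

noncomputable def distribF {n : ℕ} (v : (Fin n → ℝ) → ℝ) (g : (Fin n → ℝ) → ℝ≥0∞)
    (y : ℝ≥0∞) : ℝ≥0∞ :=
  wInt v {x | y < g x}

noncomputable def wkLorentz {n : ℕ} (p : ℝ) (v : (Fin n → ℝ) → ℝ)
    (g : (Fin n → ℝ) → ℝ≥0∞) : ℝ≥0∞ :=
  ⨆ y : ℝ≥0, (y : ℝ≥0∞) * (distribF v g y) ^ (1 / p)

noncomputable def lorentzOne {n : ℕ} (p : ℝ) (v : (Fin n → ℝ) → ℝ)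
    (g : (Fin n → ℝ) → ℝ≥0∞) : ℝ≥0∞ :=
  ENNReal.ofReal p * ∫⁻ y in Set.Ioi (0:ℝ), (distribF v g (ENNReal.ofReal y)) ^ (1 / p)

noncomputable def ofFun {n : ℕ} (f : (Fin n → ℝ) → ℝ) : (Fin n → ℝ) → ℝ≥0∞ :=
  fun x => ENNReal.ofReal |f x|

noncomputable def l1Norm {n : ℕ} (u f : (Fin n → ℝ) → ℝ) : ℝ≥0∞ :=
  ∫⁻ x, ENNReal.ofReal |f x| * ENNReal.ofReal (u x)


/-! With `v = (Mh)^{1-p} u` and `B = ess inf_Q Mh`, we have `v ≤ B^{1-p} u` on `Q`, so the `A₁`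
condition gives `v(Q) ≤ ‖u‖_{A₁} B^{1-p} (ess inf_Q u) |Q|`. Balls larger than `Q` that meet it
carry an average of `|h|` at most `3^n B`, so above the level `λ = 2·12^n B |Q| / |E|` only balls
smaller than `Q` matter, and the Vitali covering lemma gives `|{Mh > λ} ∩ Q| ≤ 12^n B |Q| / λ =
|E| / 2`. Hence `Mh ≤ λ` on half of `E`, where `v ≥ λ^{1-p} ess inf_Q u`, and the two bounds
balance to the constant `2 (2·12^n)^{p-1}`. -/

open Metric Topology

theorem Vitali.measure_mul_le_of_forall_mem_closedBall {α : Type*} [PseudoMetricSpace α]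
    [TopologicalSpace.SeparableSpace α] [MeasurableSpace α] [OpensMeasurableSpace α]
    (μ ν : Measure α) {D : ℝ≥0∞}
    (hμ : ∀ x r, 0 < r → μ (closedBall x (4 * r)) ≤ D * μ (closedBall x r))
    {S A : Set α} {R : ℝ} {L : ℝ≥0∞}
    (hS : ∀ x ∈ S, ∃ c r, 0 < r ∧ r ≤ R ∧ x ∈ closedBall c r ∧ closedBall c r ⊆ A ∧
      μ (closedBall c r) * L ≤ ν (closedBall c r)) :
    μ S * L ≤ D * ν A := by
  choose! c r hr hrR hxc hA hL using hS
  obtain ⟨U, hUS, hdisj, hcov⟩ :=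
    Vitali.exists_disjoint_subfamily_covering_enlargement_closedBall S c r R hrR 4 (by norm_num)
  have hU : U.Countable := hdisj.countable_of_nonempty_interior fun x hx =>
    (nonempty_ball.2 (hr x (hUS hx))).mono ball_subset_interior_closedBall
  have hSU : S ⊆ ⋃ x ∈ U, closedBall (c x) (4 * r x) := fun x hx => by
    obtain ⟨y, hy, hsub⟩ := hcov x hx
    exact mem_biUnion hy (hsub (hxc x hx))
  calc μ S * L ≤ (∑' x : U, μ (closedBall (c x) (4 * r x))) * L := by
        gcongr
        exact (measure_mono hSU).trans (measure_biUnion_le μ hU _)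
    _ ≤ (∑' x : U, D * μ (closedBall (c x) (r x))) * L := by
        gcongr with x
        exact hμ _ _ (hr x (hUS x.2))
    _ = D * ∑' x : U, μ (closedBall (c x) (r x)) * L := by
        rw [ENNReal.tsum_mul_left, ENNReal.tsum_mul_right, mul_assoc]
    _ ≤ D * ∑' x : U, ν (closedBall (c x) (r x)) := by
        gcongr with x
        exact hL x (hUS x.2)
    _ = D * ν (⋃ x ∈ U, closedBall (c x) (r x)) := by
        rw [measure_biUnion hU hdisj fun x _ => measurableSet_closedBall]
    _ ≤ D * ν A := by
        gcongr
        exact iUnion₂_subset fun x hx => hA x (hUS hx)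

section MaximalOperator

variable {n : ℕ} {h : (Fin n → ℝ) → ℝ}

theorem volume_closedBall_mul (x y : Fin n → ℝ) {k r : ℝ} (hk : 0 ≤ k) (hr : 0 ≤ r) :
    volume (closedBall x (k * r)) = ENNReal.ofReal (k ^ n) * volume (closedBall y r) := by
  rw [Real.volume_pi_closedBall _ (mul_nonneg hk hr), Real.volume_pi_closedBall _ hr,
    Fintype.card_fin, ← ENNReal.ofReal_mul (by positivity), ← mul_pow, mul_left_comm]

noncomputable def ballAvg (h : (Fin n → ℝ) → ℝ) (c : Fin n → ℝ) (r : ℝ) : ℝ≥0∞ :=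
  (∫⁻ y in closedBall c r, ENNReal.ofReal |h y|) / volume (closedBall c r)

theorem lt_maxOp_iff {a : ℝ≥0∞} {x : Fin n → ℝ} :
    a < maxOp h x ↔ ∃ c r, 0 < r ∧ x ∈ closedBall c r ∧ a < ballAvg h c r := by
  simp only [maxOp, lt_iSup_iff, ballAvg, exists_prop]

theorem ballAvg_le_maxOp {x c : Fin n → ℝ} {r : ℝ} (hr : 0 < r) (hx : x ∈ closedBall c r) :
    ballAvg h c r ≤ maxOp h x :=
  le_iSup₂_of_le c r <| le_iSup₂_of_le (α := ℝ≥0∞) hr hx le_rfl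

theorem ballAvg_le_mul_ballAvg {c c' : Fin n → ℝ} {r k : ℝ} (hr : 0 < r) (hk : 0 < k)
    (hsub : closedBall c' r ⊆ closedBall c (k * r)) :
    ballAvg h c' r ≤ ENNReal.ofReal (k ^ n) * ballAvg h c (k * r) := by
  have hk0 : ENNReal.ofReal (k ^ n) ≠ 0 := (ENNReal.ofReal_pos.2 (by positivity)).ne'
  calc ballAvg h c' r
      ≤ (∫⁻ y in closedBall c (k * r), ENNReal.ofReal |h y|) / volume (closedBall c' r) := by
        unfold ballAvg; gcongr
    _ = ENNReal.ofReal (k ^ n) * ballAvg h c (k * r) := by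
        rw [ballAvg, volume_closedBall_mul c c' hk.le hr.le, ← mul_div_assoc,
          ENNReal.mul_div_mul_left _ _ hk0 ENNReal.ofReal_ne_top]

theorem ballAvg_le_essInf_maxOp {c c' : Fin n → ℝ} {r r' : ℝ} (hr' : 0 < r')
    (hsub : closedBall c r ⊆ closedBall c' r') :
    ballAvg h c' r' ≤ essInf (maxOp h) (volume.restrict (closedBall c r)) :=
  le_essInf_of_ae_le _ <| (ae_restrict_mem measurableSet_closedBall).mono fun _ hy =>
    ballAvg_le_maxOp hr' (hsub hy)

theorem ballAvg_le_three_pow_mul_essInf {x c c' : Fin n → ℝ} {r r' : ℝ} (hr' : 0 < r')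
    (hrr' : r ≤ r') (hx : x ∈ closedBall c r) (hx' : x ∈ closedBall c' r') :
    ballAvg h c' r' ≤
      ENNReal.ofReal (3 ^ n) * essInf (maxOp h) (volume.restrict (closedBall c r)) := by
  have hdist : dist c' c ≤ r' + r :=
    (dist_triangle c' x c).trans (add_le_add (mem_closedBall'.1 hx') (mem_closedBall.1 hx))
  calc ballAvg h c' r' ≤ ENNReal.ofReal (3 ^ n) * ballAvg h c (3 * r') :=
        ballAvg_le_mul_ballAvg hr' (by norm_num) (closedBall_subset_closedBall' (by linarith))
    _ ≤ _ := by
        gcongr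
        exact ballAvg_le_essInf_maxOp (by positivity) (closedBall_subset_closedBall (by linarith))

theorem essInf_maxOp_pos {x c : Fin n → ℝ} {r : ℝ} (hx : 0 < maxOp h x) (hr : 0 ≤ r) :
    0 < essInf (maxOp h) (volume.restrict (closedBall c r)) := by
  obtain ⟨c', r', hr', -, havg⟩ := lt_maxOp_iff.1 hx
  have hR : 0 < r + dist c' c + r' := by positivity
  have hrR : r ≤ r + dist c' c + r' := by linarith [dist_nonneg (x := c') (y := c)]
  refine lt_of_lt_of_le ?_ (ballAvg_le_essInf_maxOp hR (closedBall_subset_closedBall hrR))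
  have hI : (∫⁻ y in closedBall c' r', ENNReal.ofReal |h y|) ≠ 0 :=
    (ENNReal.div_pos_iff.1 havg).1
  refine ENNReal.div_pos_iff.2 ⟨fun h0 => hI ?_, measure_closedBall_lt_top.ne⟩
  exact le_antisymm (h0 ▸ lintegral_mono_set (closedBall_subset_closedBall' (by linarith))) zero_le

theorem lowerSemicontinuous_maxOp : LowerSemicontinuous (maxOp h) := by
  intro x a hx
  obtain ⟨c, r, hr, hxc, havg⟩ := lt_maxOp_iff.1 hx
  set I := ∫⁻ y in closedBall c r, ENNReal.ofReal |h y|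
  have hvol : ∀ s, 0 < s → volume (closedBall c s) = ENNReal.ofReal ((2 * s) ^ n) := fun s hs => by
    rw [Real.volume_pi_closedBall c hs.le, Fintype.card_fin]
  have hmul : a * ENNReal.ofReal ((2 * r) ^ n) < I := by
    rw [← hvol r hr, ← ENNReal.lt_div_iff_mul_lt (Or.inl (measure_closedBall_pos _ _ hr).ne')
      (Or.inl measure_closedBall_lt_top.ne)]
    exact havg
  have ha : a ≠ ⊤ := by
    rintro rfl
    rw [ENNReal.top_mul (ENNReal.ofReal_pos.2 (by positivity)).ne'] at hmul
    exact not_top_lt hmul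
  -- Enlarging the ball slightly keeps the average above `a`, and the enlarged ball is a
  -- neighbourhood of `x`.
  have hcont : Continuous fun s : ℝ => a * ENNReal.ofReal ((2 * s) ^ n) :=
    (ENNReal.continuous_const_mul ha).comp (ENNReal.continuous_ofReal.comp (by fun_prop))
  obtain ⟨r', hr'I, hrr'⟩ :=
    (((hcont.tendsto r).mono_left nhdsWithin_le_nhds).eventually_lt_const hmul |>.and
      self_mem_nhdsWithin).exists (f := 𝓝[>] r)
  have hr' : 0 < r' := hr.trans hrr'
  filter_upwards [ball_mem_nhds x (sub_pos.2 (mem_Ioi.1 hrr'))] with y hy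
  refine lt_of_lt_of_le ?_ (ballAvg_le_maxOp hr' (closedBall_subset_closedBall'
    (by linarith [mem_closedBall.1 hxc]) (ball_subset_closedBall hy)))
  rw [ballAvg, ENNReal.lt_div_iff_mul_lt (Or.inl (measure_closedBall_pos _ _ hr').ne')
    (Or.inl measure_closedBall_lt_top.ne), hvol r' hr']
  exact hr'I.trans_le (lintegral_mono_set (closedBall_subset_closedBall hrr'.le))

theorem volume_lt_maxOp_inter_closedBall_mul_le {c : Fin n → ℝ} {r : ℝ} {L : ℝ≥0∞} (hr : 0 < r)
    (hL : ENNReal.ofReal (3 ^ n) * essInf (maxOp h) (volume.restrict (closedBall c r)) < L) :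
    volume ({x | L < maxOp h x} ∩ closedBall c r) * L ≤
      ENNReal.ofReal (12 ^ n) * essInf (maxOp h) (volume.restrict (closedBall c r)) *
        volume (closedBall c r) := by
  set B := essInf (maxOp h) (volume.restrict (closedBall c r))
  set ν := volume.withDensity fun y => ENNReal.ofReal |h y|
  have hcover : ∀ x ∈ {x | L < maxOp h x} ∩ closedBall c r, ∃ c' r', 0 < r' ∧ r' ≤ r ∧
      x ∈ closedBall c' r' ∧ closedBall c' r' ⊆ closedBall c (3 * r) ∧
      volume (closedBall c' r') * L ≤ ν (closedBall c' r') := by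
    rintro x ⟨hxL, hxc⟩
    obtain ⟨c', r', hr', hx', havg⟩ := lt_maxOp_iff.1 hxL
    -- Balls of radius larger than `r` have average at most `3 ^ n * B < L`.
    have hr'r : r' ≤ r := le_of_not_gt fun hlt =>
      (havg.trans_le (ballAvg_le_three_pow_mul_essInf hr' hlt.le hxc hx')).not_gt hL
    refine ⟨c', r', hr', hr'r, hx', closedBall_subset_closedBall' ?_, ?_⟩
    · linarith [dist_triangle c' x c, mem_closedBall'.1 hx', mem_closedBall.1 hxc]
    · rw [withDensity_apply _ measurableSet_closedBall, mul_comm]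
      exact ((ENNReal.lt_div_iff_mul_lt (Or.inl (measure_closedBall_pos _ _ hr').ne')
        (Or.inl measure_closedBall_lt_top.ne)).1 havg).le
  have h3r : (0 : ℝ) < 3 * r := by positivity
  have hI : ∫⁻ y in closedBall c (3 * r), ENNReal.ofReal |h y| ≤
      ENNReal.ofReal (3 ^ n) * B * volume (closedBall c r) := by
    have := ballAvg_le_essInf_maxOp (h := h) h3r (closedBall_subset_closedBall (by linarith) :
      closedBall c r ⊆ closedBall c (3 * r))
    rwa [ballAvg, ENNReal.div_le_iff_le_mul (Or.inl (measure_closedBall_pos _ _ h3r).ne')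
      (Or.inl measure_closedBall_lt_top.ne), volume_closedBall_mul c c (by norm_num) hr.le,
      mul_left_comm, ← mul_assoc] at this
  calc volume ({x | L < maxOp h x} ∩ closedBall c r) * L
      ≤ ENNReal.ofReal (4 ^ n) * ν (closedBall c (3 * r)) :=
        Vitali.measure_mul_le_of_forall_mem_closedBall volume ν
          (fun x s hs => (volume_closedBall_mul x x (by norm_num) hs.le).le) hcover
    _ ≤ ENNReal.ofReal (4 ^ n) * (ENNReal.ofReal (3 ^ n) * B * volume (closedBall c r)) := by
        rw [withDensity_apply _ measurableSet_closedBall]; gcongr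
    _ = _ := by
        rw [← mul_assoc, ← mul_assoc, ← ENNReal.ofReal_mul (by positivity), ← mul_pow]
        norm_num

end MaximalOperator

section HatWeight

variable {n : ℕ} {p : ℝ} {h u : (Fin n → ℝ) → ℝ}

noncomputable def hatWeight (p : ℝ) (h u : (Fin n → ℝ) → ℝ) (x : Fin n → ℝ) : ℝ :=
  (maxOp h x).toReal ^ (1 - p) * u x

theorem wInt_hatWeight_le (hp : 1 ≤ p) (hu : ∀ x, 0 ≤ u x) {A : Set (Fin n → ℝ)} {b : ℝ}
    (hb : 0 < b) (hA : ∀ᵐ x ∂volume.restrict A, ENNReal.ofReal b ≤ maxOp h x ∧ maxOp h x < ⊤) :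
    wInt (hatWeight p h u) A ≤ ENNReal.ofReal (b ^ (1 - p)) * wInt u A := by
  rw [wInt, wInt, ← lintegral_const_mul' _ _ ENNReal.ofReal_ne_top]
  refine lintegral_mono_ae (hA.mono fun x ⟨hbx, hx⟩ => ?_)
  rw [← ENNReal.ofReal_mul (by positivity)]
  refine ENNReal.ofReal_le_ofReal (mul_le_mul_of_nonneg_right ?_ (hu x))
  exact Real.rpow_le_rpow_of_nonpos hb ((ENNReal.ofReal_le_iff_le_toReal hx.ne).1 hbx)
    (by linarith)

theorem le_wInt_hatWeight (hp : 1 ≤ p) (hu : ∀ x, 0 ≤ u x) {A : Set (Fin n → ℝ)} {l : ℝ}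
    (hA : ∀ᵐ x ∂volume.restrict A, 0 < maxOp h x ∧ maxOp h x ≤ ENNReal.ofReal l) :
    ENNReal.ofReal (l ^ (1 - p)) * wInt u A ≤ wInt (hatWeight p h u) A := by
  rw [wInt, wInt, ← lintegral_const_mul' _ _ ENNReal.ofReal_ne_top]
  refine lintegral_mono_ae (hA.mono fun x ⟨hx0, hxl⟩ => ?_)
  have hl : 0 < l := ENNReal.ofReal_pos.1 (hx0.trans_le hxl)
  rw [← ENNReal.ofReal_mul (by positivity)]
  refine ENNReal.ofReal_le_ofReal (mul_le_mul_of_nonneg_right ?_ (hu x))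
  exact Real.rpow_le_rpow_of_nonpos
    (ENNReal.toReal_pos hx0.ne' (hxl.trans_lt ENNReal.ofReal_lt_top).ne)
    (ENNReal.toReal_le_of_le_ofReal hl.le hxl) (by linarith)

theorem essInf_mul_volume_le_wInt {Q T : Set (Fin n → ℝ)} (hTQ : T ⊆ Q) :
    essInf (fun y => ENNReal.ofReal (u y)) (volume.restrict Q) * volume T ≤ wInt u T := by
  rw [← setLIntegral_const]
  exact lintegral_mono_ae (ae_restrict_of_ae_restrict_of_subset hTQ ae_essInf_le)

theorem le_wInt_hatWeight_of_volume_le_half (hp : 1 ≤ p) (hu : ∀ x, 0 ≤ u x)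
    (hpos : ∀ᵐ x, 0 < maxOp h x) {Q E : Set (Fin n → ℝ)} (hE : MeasurableSet E) (hEQ : E ⊆ Q)
    (hEtop : volume E ≠ ⊤) {l : ℝ}
    (hS : volume (E ∩ {x | ENNReal.ofReal l < maxOp h x}) ≤ volume E / 2) :
    ENNReal.ofReal (l ^ (1 - p)) *
        (essInf (fun y => ENNReal.ofReal (u y)) (volume.restrict Q) * (volume E / 2)) ≤
      wInt (hatWeight p h u) E := by
  set F := {x | ENNReal.ofReal l < maxOp h x}
  have hF : MeasurableSet F :=
    measurableSet_lt measurable_const lowerSemicontinuous_maxOp.measurable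
  have hT : volume E / 2 ≤ volume (E \ F) := by
    rw [← ENNReal.sub_half hEtop, tsub_le_iff_left]
    exact (measure_le_inter_add_sdiff volume E F).trans (by gcongr)
  calc _ ≤ ENNReal.ofReal (l ^ (1 - p)) * wInt u (E \ F) := by
        gcongr
        exact (mul_le_mul_right hT _).trans (essInf_mul_volume_le_wInt (sdiff_subset.trans hEQ))
    _ ≤ wInt (hatWeight p h u) (E \ F) :=
        le_wInt_hatWeight hp hu <| (ae_restrict_of_ae hpos).and <|
          (ae_restrict_mem (hE.diff hF)).mono fun _ hx => not_lt.1 hx.2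
    _ ≤ wInt (hatWeight p h u) E := lintegral_mono_set sdiff_subset

end HatWeight

theorem rpow_mul_rpow_one_sub_mul_eq (p : ℝ) {b q e K : ℝ} (hb : 0 < b) (hq : 0 < q)
    (he : 0 < e) (hK : 0 < K) :
    e ^ p * b ^ (1 - p) * q = K ^ (p - 1) * q ^ p * ((K * b * q / e) ^ (1 - p) * e) := by
  rw [Real.div_rpow (by positivity) he.le, Real.mul_rpow (by positivity) hq.le,
    Real.mul_rpow hK.le hb.le]
  simp only [Real.rpow_sub hK, Real.rpow_sub hq, Real.rpow_sub he, Real.rpow_one]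
  field_simp

section Comparison

variable {n : ℕ} {p : ℝ} {h u : (Fin n → ℝ) → ℝ}

theorem volume_lt_maxOp_inter_closedBall_le_half {c : Fin n → ℝ} {r b e : ℝ} (hr : 0 < r)
    (hb : 0 < b) (hB : essInf (maxOp h) (volume.restrict (closedBall c r)) = ENNReal.ofReal b)
    (he : 0 < e) (heq : e ≤ (volume (closedBall c r)).toReal) :
    volume ({x | ENNReal.ofReal (2 * 12 ^ n * b * (volume (closedBall c r)).toReal / e) <
        maxOp h x} ∩ closedBall c r) ≤ ENNReal.ofReal (e / 2) := by
  set q := (volume (closedBall c r)).toReal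
  have hq : 0 < q := he.trans_le heq
  set l := 2 * 12 ^ n * b * q / e
  have hl : 0 < l := by positivity
  have hl3 : 3 ^ n * b < l := by
    have h3 : (3 : ℝ) ^ n < 2 * 12 ^ n :=
      (pow_le_pow_left₀ (by norm_num) (by norm_num : (3 : ℝ) ≤ 12) n).trans_lt
        (by linarith [pow_pos (by norm_num : (0 : ℝ) < 12) n])
    calc 3 ^ n * b < 2 * 12 ^ n * b := by gcongr
      _ ≤ l := by rw [le_div_iff₀ he]; gcongr
  have key := volume_lt_maxOp_inter_closedBall_mul_le hr (L := ENNReal.ofReal l) (by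
    rw [hB, ← ENNReal.ofReal_mul (by positivity)]
    exact (ENNReal.ofReal_lt_ofReal_iff hl).2 hl3)
  rw [hB, ← ENNReal.ofReal_toReal measure_closedBall_lt_top.ne,
    ← ENNReal.ofReal_mul (by positivity), ← ENNReal.ofReal_mul (by positivity),
    ← ENNReal.le_div_iff_mul_le (Or.inl (by positivity)) (Or.inl ENNReal.ofReal_ne_top),
    ← ENNReal.ofReal_div_of_pos hl] at key
  refine key.trans_eq (congrArg ENNReal.ofReal ?_)
  simp only [l, q]
  field_simp

theorem exists_essInf_maxOp_eq_ofReal (hpos : ∀ᵐ x, 0 < maxOp h x)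
    (hfin : ∀ᵐ x, maxOp h x < ⊤) {c : Fin n → ℝ} {r : ℝ} (hr : 0 < r) :
    ∃ b : ℝ, 0 < b ∧ essInf (maxOp h) (volume.restrict (closedBall c r)) = ENNReal.ofReal b := by
  have : (ae (volume.restrict (closedBall c r))).NeBot :=
    ae_restrict_neBot.2 (measure_closedBall_pos _ _ hr).ne'
  obtain ⟨x, hBx, hx⟩ := (Eventually.and (ae_essInf_le (μ := volume.restrict (closedBall c r))
    (f := maxOp h)) (ae_restrict_of_ae hfin)).exists
  have hBtop := (hBx.trans_lt hx).ne
  obtain ⟨y, hy⟩ := hpos.exists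
  exact ⟨_, ENNReal.toReal_pos (essInf_maxOp_pos hy hr.le).ne' hBtop,
    (ENNReal.ofReal_toReal hBtop).symm⟩

theorem wInt_hatWeight_closedBall_le (hp : 1 ≤ p) {Cu : ℝ} (hu : IsA1 u Cu)
    (hfin : ∀ᵐ x, maxOp h x < ⊤) {c : Fin n → ℝ} {r b : ℝ} (hr : 0 < r) (hb : 0 < b)
    (hB : essInf (maxOp h) (volume.restrict (closedBall c r)) = ENNReal.ofReal b) :
    wInt (hatWeight p h u) (closedBall c r) ≤ ENNReal.ofReal (b ^ (1 - p)) *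
      (ENNReal.ofReal Cu * essInf (fun y => ENNReal.ofReal (u y))
        (volume.restrict (closedBall c r)) * volume (closedBall c r)) :=
  (wInt_hatWeight_le hp hu.1 hb ((hB ▸ ae_essInf_le).and (ae_restrict_of_ae hfin))).trans
    (by gcongr; exact hu.2.2 c r hr)

theorem le_wInt_hatWeight_of_subset_closedBall (hp : 1 ≤ p) (hu : ∀ x, 0 ≤ u x)
    (hpos : ∀ᵐ x, 0 < maxOp h x) {c : Fin n → ℝ} {r b : ℝ} (hr : 0 < r) (hb : 0 < b)
    (hB : essInf (maxOp h) (volume.restrict (closedBall c r)) = ENNReal.ofReal b)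
    {E : Set (Fin n → ℝ)} (hE : MeasurableSet E) (hEQ : E ⊆ closedBall c r)
    (hE0 : volume E ≠ 0) :
    ENNReal.ofReal ((2 * 12 ^ n * b * (volume (closedBall c r)).toReal / (volume E).toReal) ^
        (1 - p)) * (essInf (fun y => ENNReal.ofReal (u y)) (volume.restrict (closedBall c r)) *
          (volume E / 2)) ≤
      wInt (hatWeight p h u) E := by
  have hQtop : volume (closedBall c r) ≠ ⊤ := measure_closedBall_lt_top.ne
  have hEtop : volume E ≠ ⊤ := ne_top_of_le_ne_top hQtop (measure_mono hEQ)
  refine le_wInt_hatWeight_of_volume_le_half hp hu hpos hE hEQ hEtop ?_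
  rw [inter_comm]
  refine (measure_mono (inter_subset_inter_right _ hEQ)).trans
    ((volume_lt_maxOp_inter_closedBall_le_half hr hb hB (ENNReal.toReal_pos hE0 hEtop)
      (ENNReal.toReal_mono hQtop (measure_mono hEQ))).trans_eq ?_)
  rw [ENNReal.ofReal_div_of_pos two_pos, ENNReal.ofReal_toReal hEtop, ENNReal.ofReal_ofNat]

theorem volume_rpow_mul_wInt_hatWeight_le (hp : 1 < p) {Cu : ℝ} (hu : IsA1 u Cu)
    (hpos : ∀ᵐ x, 0 < maxOp h x) (hfin : ∀ᵐ x, maxOp h x < ⊤) {c : Fin n → ℝ} {r : ℝ}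
    (hr : 0 < r) {E : Set (Fin n → ℝ)} (hE : MeasurableSet E) (hEQ : E ⊆ closedBall c r) :
    volume E ^ p * wInt (hatWeight p h u) (closedBall c r) ≤
      ENNReal.ofReal (2 * (2 * 12 ^ n) ^ (p - 1) * Cu) * volume (closedBall c r) ^ p *
        wInt (hatWeight p h u) E := by
  rcases eq_or_ne (volume E) 0 with hE0 | hE0
  · simp [hE0, ENNReal.zero_rpow_of_pos (by linarith : 0 < p)]
  obtain ⟨b, hb, hB⟩ := exists_essInf_maxOp_eq_ofReal hpos hfin (c := c) hr
  have hvQ := wInt_hatWeight_closedBall_le (p := p) hp.le hu hfin hr hb hB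
  have hvE := le_wInt_hatWeight_of_subset_closedBall hp.le hu.1 hpos hr hb hB hE hEQ hE0
  set Q := closedBall c r
  set m := essInf (fun y => ENNReal.ofReal (u y)) (volume.restrict Q)
  have hQtop : volume Q ≠ ⊤ := measure_closedBall_lt_top.ne
  have hEtop : volume E ≠ ⊤ := ne_top_of_le_ne_top hQtop (measure_mono hEQ)
  set q := (volume Q).toReal
  set e := (volume E).toReal
  have hq : 0 < q := ENNReal.toReal_pos (measure_closedBall_pos _ _ hr).ne' hQtop
  have he : 0 < e := ENNReal.toReal_pos hE0 hEtop
  set K : ℝ := 2 * 12 ^ n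
  have hK : 0 < K := by positivity
  set l := K * b * q / e
  -- The level `l` is chosen so that the two bounds balance.
  have hcoeff : volume E ^ p * ENNReal.ofReal (b ^ (1 - p)) * volume Q =
      ENNReal.ofReal (2 * K ^ (p - 1)) * volume Q ^ p *
        (ENNReal.ofReal (l ^ (1 - p)) * (volume E / 2)) := by
    rw [← ENNReal.ofReal_toReal hEtop, ← ENNReal.ofReal_toReal hQtop,
      ENNReal.ofReal_rpow_of_pos he, ENNReal.ofReal_rpow_of_pos hq,
      ← ENNReal.ofReal_ofNat 2, ← ENNReal.ofReal_div_of_pos two_pos,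
      ← ENNReal.ofReal_mul (by positivity), ← ENNReal.ofReal_mul (by positivity),
      ← ENNReal.ofReal_mul (by positivity), ← ENNReal.ofReal_mul (by positivity),
      ← ENNReal.ofReal_mul (by positivity)]
    congr 1
    linear_combination rpow_mul_rpow_one_sub_mul_eq p hb hq he hK
  calc volume E ^ p * wInt (hatWeight p h u) Q
      ≤ volume E ^ p * (ENNReal.ofReal (b ^ (1 - p)) * (ENNReal.ofReal Cu * m * volume Q)) := by
        gcongr
    _ = ENNReal.ofReal Cu * m * (volume E ^ p * ENNReal.ofReal (b ^ (1 - p)) * volume Q) := by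
        ring
    _ = ENNReal.ofReal (2 * K ^ (p - 1)) * ENNReal.ofReal Cu * volume Q ^ p *
          (ENNReal.ofReal (l ^ (1 - p)) * (m * (volume E / 2))) := by
        rw [hcoeff]; ring
    _ ≤ _ := by
        rw [ENNReal.ofReal_mul (by positivity : (0 : ℝ) ≤ 2 * K ^ (p - 1))]
        gcongr

end Comparison

/-- `A_p`-type comparison for `Â_p` weights: if `v = (Mh)^{1−p} u` with `u ∈ A₁` and
`1 < p < ∞`, then for every cube `Q` and measurable `E ⊆ Q`,
`|E|^p v(Q) ≤ C_{n,p} ‖u‖_{A₁} |Q|^p v(E)`, i.e. `v(Q)/v(E) ≤ C_{n,p}‖u‖_{A₁}(|Q|/|E|)^p`. -/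
theorem hatAp_comparison (n : ℕ) (p : ℝ) (hp : 1 < p) :
    ∃ C : ℝ, 0 < C ∧
      ∀ (h u : (Fin n → ℝ) → ℝ) (Cu : ℝ), IsA1 u Cu → 1 ≤ Cu →
        MeasureTheory.LocallyIntegrable h volume →
        (∀ᵐ x, 0 < maxOp h x) → (∀ᵐ x, maxOp h x < ⊤) →
        ∀ (c : Fin n → ℝ) (r : ℝ), 0 < r →
          ∀ E : Set (Fin n → ℝ), MeasurableSet E → E ⊆ Metric.closedBall c r →
            volume E ^ p * wInt (fun x => (maxOp h x).toReal ^ (1 - p) * u x)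
                (Metric.closedBall c r) ≤
              ENNReal.ofReal (C * Cu) * volume (Metric.closedBall c r) ^ p *
                wInt (fun x => (maxOp h x).toReal ^ (1 - p) * u x) E :=
  ⟨2 * (2 * 12 ^ n) ^ (p - 1), by positivity, fun _ _ _ hu _ _ hpos hfin _ _ hr _ hE hEQ =>
    volume_rpow_mul_wInt_hatWeight_le hp hu hpos hfin hr hE hEQ⟩
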